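/- arXiv:2006.04615 — 3 statements merged into one kernel-verified Lean document; each statement's English description precedes it below -/
import Mathlib

section
/- Let A be a C*-algebra and (J_i)_{i∈I} a family of closed two-sided ideals of A such that ⋂_{i∈I} J_i = {0} and such that, for each a ∈ A, the function i ↦ ‖a + J_i‖ tends to 0 along the cofinite filter on I. Let B = ⊕_{i∈I} A/J_i be the c0-direct sum and η : A → B the *-homomorphism η(a) = (a + J_i)_{i∈I}. Then the image η(A) is a nondegenerate subalgebra of B: the closed linear span of {η(a)·b : a ∈ A, b ∈ B} is all of B. Equivalently, for every b ∈ B and every ε > 0 there exists a ∈ A with ‖η(a)·b − b‖ < ε. -/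
/-!
The c₀-condition leaves only finitely many indices where `b i` is not already close to `J i`.
An element `a` of an approximate unit with `‖a‖ ≤ 1` nearly fixes the finitely many `b i` in
norm; at every other index, `x ↦ a * x - x` is `2`-Lipschitz and maps `J i` into itself, so it
keeps `b i` close to `J i`.
-/

open Metric Filter Topology

lemma NonUnitalCStarAlgebra.exists_norm_le_one_norm_mul_sub_lt {A : Type*}
    [NonUnitalCStarAlgebra A] {s : Set A} (hs : s.Finite) {ε : ℝ} (hε : 0 < ε) :
    ∃ a : A, ‖a‖ ≤ 1 ∧ ∀ x ∈ s, ‖a * x - x‖ < ε := by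
  let _ := CStarAlgebra.spectralOrder A
  have := CStarAlgebra.spectralOrderedRing A
  have hl := CStarAlgebra.increasingApproximateUnit A
  have hclose : ∀ᶠ a in CStarAlgebra.approximateUnit A, ∀ x ∈ s, ‖a * x - x‖ < ε :=
    (eventually_all_finite hs).2 fun x _ ↦ by
      simpa only [dist_eq_norm] using (hl.tendsto_mul_right x).eventually (ball_mem_nhds x hε)
  exact (hl.eventually_norm.and hclose).exists

lemma TwoSidedIdeal.infDist_mul_sub_le {A : Type*} [NonUnitalNormedRing A] (J : TwoSidedIdeal A)
    {a : A} (ha : ‖a‖ ≤ 1) (x : A) :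
    infDist (a * x - x) (J : Set A) ≤ 2 * infDist x (J : Set A) := by
  rw [← div_le_iff₀' two_pos, le_infDist ⟨0, J.zero_mem⟩]
  intro j hj
  have hmem : a * j - j ∈ J := J.sub_mem (J.mul_mem_left a j hj) hj
  rw [div_le_iff₀' two_pos, dist_eq_norm]
  calc infDist (a * x - x) (J : Set A)
      ≤ dist (a * x - x) (a * j - j) := infDist_le_dist_of_mem hmem
    _ = ‖a * (x - j) - (x - j)‖ := by rw [dist_eq_norm]; noncomm_ring
    _ ≤ ‖a‖ * ‖x - j‖ + ‖x - j‖ := (norm_sub_le _ _).trans (by gcongr; exact norm_mul_le _ _)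
    _ ≤ 2 * ‖x - j‖ := by nlinarith [norm_nonneg (x - j)]

theorem statement1_general
    {ι : Type*} {A : Type*} [NonUnitalCStarAlgebra A]
    (J : ι → TwoSidedIdeal A) :
    ∀ b : ι → A, Tendsto (fun i => infDist (b i) (J i : Set A)) cofinite (𝓝 0) →
      ∀ ε : ℝ, 0 < ε →
        ∃ a : A, ∀ i, infDist (a * b i - b i) (J i : Set A) < ε := by
  intro b hb ε hε
  set S := {i | ¬ infDist (b i) (J i : Set A) < ε / 2}
  have hS : S.Finite := eventually_cofinite.1 <| hb.eventually (gt_mem_nhds (half_pos hε))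
  obtain ⟨a, ha, hab⟩ :=
    NonUnitalCStarAlgebra.exists_norm_le_one_norm_mul_sub_lt (hS.image b) hε
  refine ⟨a, fun i ↦ ?_⟩
  by_cases hi : i ∈ S
  · calc infDist (a * b i - b i) (J i : Set A)
        ≤ dist (a * b i - b i) 0 := infDist_le_dist_of_mem (J i).zero_mem
      _ < ε := by rw [dist_zero_right]; exact hab _ (Set.mem_image_of_mem b hi)
  · calc infDist (a * b i - b i) (J i : Set A)
        ≤ 2 * infDist (b i) (J i : Set A) := (J i).infDist_mul_sub_le ha (b i)
      _ < ε := by simp only [S, Set.mem_ofPred_eq, not_not] at hi; linarith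

theorem statement1
    {ι : Type*} {A : Type*} [NonUnitalCStarAlgebra A]
    (J : ι → TwoSidedIdeal A)
    (hJclosed : ∀ i, IsClosed ((J i : Set A)))
    (hJinter : ∀ a : A, (∀ i, a ∈ J i) → a = 0)
    (hJc0 : ∀ a : A, Tendsto (fun i => infDist a (J i : Set A)) cofinite (𝓝 0)) :
    ∀ b : ι → A, Tendsto (fun i => infDist (b i) (J i : Set A)) cofinite (𝓝 0) →
      ∀ ε : ℝ, 0 < ε →
        ∃ a : A, ∀ i, infDist (a * b i - b i) (J i : Set A) < ε :=
  statement1_general J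
end

section
/- Let A be a C*-algebra, n ≥ 1, and let J_1, …, J_n be closed two-sided ideals of A with J_1 ∩ ⋯ ∩ J_n = {0}. For each pair (i,j), the sum J_i + J_j is a closed two-sided ideal of A; let q_{ij} : A/J_i → A/(J_i + J_j) denote the canonical quotient *-homomorphism. Then for every n-tuple (b_1, …, b_n) with b_i ∈ A/J_i, the following are equivalent: (1) there exists a ∈ A with a + J_i = b_i for every i; (2) q_{ij}(b_i) = q_{ji}(b_j) in A/(J_i + J_j) for all pairs (i,j). Moreover, when such an element a exists it is unique. -/
/-!
The key estimate is an approximate unit at a single element: for `y` in an ideal `I` and `ε > 0`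
there is `e ∈ I` with `‖w - e w‖ ≤ ‖w‖` for all `w` and `‖y - e y‖ ≤ ε`; in the unitization take
`e = b (b + δ)⁻¹` with `b = y y*`, so that `1 - e = δ (b + δ)⁻¹`. It shows that for `z ∈ J` the
distances from `z` to `I ∩ J` and to `I` agree, so `J ⧸ (I ∩ J) → A ⧸ I` is an isometry with
complete, hence closed, range, whose preimage is `I + J`. The same estimate gives
`I ∩ (J + K) ⊆ closure (I ∩ J + K)`, hence the distributive law `(I + K) ∩ (J + K) = I ∩ J + K`
for closed ideals, and the gluing follows by induction on the number of ideals, as in the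
Chinese remainder theorem.
-/

section Unital

variable {B : Type*} [CStarAlgebra B] [PartialOrder B] [StarOrderedRing B]
  {b : B} {δ : ℝ}

theorem one_sub_mul_cfc_inv_add_eq (hb : 0 ≤ b) (hδ : 0 < δ) :
    1 - b * cfc (fun t : ℝ => (t + δ)⁻¹) b = cfc (fun t : ℝ => δ / (t + δ)) b := by
  have hspec : ∀ t ∈ spectrum ℝ b, t + δ ≠ 0 := fun t ht =>
    (add_pos_of_nonneg_of_pos (spectrum_nonneg_of_nonneg hb ht) hδ).ne'
  have hcont : ContinuousOn (fun t : ℝ => (t + δ)⁻¹) (spectrum ℝ b) :=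
    (continuousOn_id.add continuousOn_const).inv₀ hspec
  have hbc : b * cfc (fun t : ℝ => (t + δ)⁻¹) b = cfc (fun t : ℝ => t * (t + δ)⁻¹) b := by
    rw [cfc_mul (fun t : ℝ => t) _ b continuousOn_id hcont, cfc_id' ℝ b]
  rw [hbc, ← cfc_const_one ℝ b, ← cfc_sub (fun _ => 1) (fun t : ℝ => t * (t + δ)⁻¹) b
    continuousOn_const (continuousOn_id.mul hcont)]
  refine cfc_congr fun t ht => ?_
  field_simp [hspec t ht]
  ring

theorem norm_cfc_div_add_le_one (hb : 0 ≤ b) (hδ : 0 < δ) :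
    ‖cfc (fun t : ℝ => δ / (t + δ)) b‖ ≤ 1 := by
  refine norm_cfc_le zero_le_one fun t ht => ?_
  have ht : 0 ≤ t := spectrum_nonneg_of_nonneg hb ht
  rw [Real.norm_of_nonneg (by positivity), div_le_one (by positivity)]
  linarith

theorem norm_cfc_div_add_mul_mul_le (hb : 0 ≤ b) (hδ : 0 < δ) :
    ‖cfc (fun t : ℝ => δ / (t + δ)) b * b * cfc (fun t : ℝ => δ / (t + δ)) b‖ ≤ δ / 4 := by
  have hspec : ∀ t ∈ spectrum ℝ b, 0 ≤ t := fun t ht => spectrum_nonneg_of_nonneg hb ht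
  have hcont : ContinuousOn (fun t : ℝ => δ / (t + δ)) (spectrum ℝ b) :=
    continuousOn_const.div (continuousOn_id.add continuousOn_const)
      fun t ht => (add_pos_of_nonneg_of_pos (hspec t ht) hδ).ne'
  have hdb : cfc (fun t : ℝ => δ / (t + δ)) b * b = cfc (fun t : ℝ => δ / (t + δ) * t) b := by
    rw [cfc_mul _ (fun t : ℝ => t) b hcont continuousOn_id, cfc_id' ℝ b]
  rw [hdb, ← cfc_mul (fun t : ℝ => δ / (t + δ) * t) _ b (hcont.mul continuousOn_id) hcont]
  refine norm_cfc_le (by positivity) fun t ht => ?_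
  have ht : 0 ≤ t := hspec t ht
  -- `δ² t / (t + δ)² ≤ δ / 4` is AM-GM: `4 δ t ≤ (t + δ)²`
  rw [Real.norm_of_nonneg (by positivity), div_mul_eq_mul_div, div_mul_div_comm,
    div_le_div_iff₀ (by positivity) (by norm_num)]
  nlinarith [mul_nonneg hδ.le (sq_nonneg (t - δ))]

end Unital

open Metric

theorem AddSubgroup.infDist_addSubgroupOf {E : Type*} [SeminormedAddCommGroup E]
    {I J : AddSubgroup E} (z : J) :
    infDist z (I.addSubgroupOf J : Set J) = infDist (z : E) ((I : Set E) ∩ J) := by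
  rw [← infDist_image isometry_subtype_coe]
  congr 1
  ext x
  simp [AddSubgroup.mem_addSubgroupOf, and_comm]

theorem AddSubgroup.isClosed_sup_of_infDist_le {E : Type*} [NormedAddCommGroup E]
    [CompleteSpace E] {I J : AddSubgroup E} (hI : IsClosed (I : Set E))
    (hJ : IsClosed (J : Set E)) (h : ∀ z ∈ J, infDist z ((I : Set E) ∩ J) ≤ infDist z I) :
    IsClosed ((I ⊔ J : AddSubgroup E) : Set E) := by
  have : CompleteSpace J := hJ.completeSpace_coe
  have : IsClosed (I : Set E) := hI
  let f : J ⧸ I.addSubgroupOf J →+ E ⧸ I := QuotientAddGroup.map _ _ J.subtype le_rfl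
  have hf : Isometry f := by
    refine AddMonoidHomClass.isometry_of_norm f fun x => ?_
    induction x using QuotientAddGroup.induction_on with
    | H z =>
      change ‖((z : E) : E ⧸ I)‖ = _
      rw [QuotientAddGroup.norm_mk, QuotientAddGroup.norm_mk, infDist_addSubgroupOf]
      exact le_antisymm (infDist_le_infDist_of_subset Set.inter_subset_left
        ⟨0, zero_mem _, zero_mem _⟩) (h z z.2)
  have hrange : Set.range f = QuotientAddGroup.mk '' (J : Set E) := by
    rw [← QuotientAddGroup.mk_surjective.range_comp f, Set.image_eq_range]
    rfl
  rw [sup_comm, AddSubgroup.add_normal, ← QuotientAddGroup.preimage_image_mk_eq_add, ← hrange]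
  exact (hf.antilipschitz.isClosed_range hf.uniformContinuous).preimage continuous_quot_mk

namespace TwoSidedIdeal

variable {A : Type*} [NonUnitalCStarAlgebra A]

open scoped CStarAlgebra in
open Unitization in
theorem exists_mem_norm_sub_mul_le (I : TwoSidedIdeal A) {y : A} (hy : y ∈ I) {ε : ℝ} (hε : 0 < ε) :
    ∃ e ∈ I, (∀ w, ‖w - e * w‖ ≤ ‖w‖) ∧ ‖y - e * y‖ ≤ ε := by
  set δ := ε ^ 2
  have hδ : 0 < δ := by positivity
  set b : A⁺¹ := ↑(y * star y)
  have hb : 0 ≤ b := by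
    simpa only [b, inr_mul, inr_star] using mul_star_self_nonneg (y : A⁺¹)
  set c : A⁺¹ := cfc (fun t : ℝ => (t + δ)⁻¹) b
  obtain ⟨d, hd⟩ : ∃ d : A⁺¹, cfc (fun t : ℝ => δ / (t + δ)) b = d := ⟨_, rfl⟩
  have hbc : 1 - b * c = d := hd ▸ one_sub_mul_cfc_inv_add_eq hb hδ
  -- `b * c` has scalar part `0`; `e` is its `A`-part, visibly in the ideal generated by `y`
  set e : A := y * star y * c.snd + c.fst • (y * star y)
  have he : (e : A⁺¹) = b * c := by
    ext <;> simp [e, b, add_comm]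
  have hmul (w : A) : ((w - e * w : A) : A⁺¹) = d * w := by
    rw [inr_sub, inr_mul, ← hbc, ← he, sub_mul, one_mul]
  refine ⟨e, I.add_mem (I.mul_mem_right _ _ (I.mul_mem_right _ _ hy)) ?_, fun w => ?_, ?_⟩
  · rw [← mul_smul_comm]
    exact I.mul_mem_right _ _ hy
  · calc ‖w - e * w‖ = ‖d * (w : A⁺¹)‖ := by rw [← hmul, norm_inr]
      _ ≤ ‖d‖ * ‖w‖ := by rw [← norm_inr (𝕜 := ℂ) w]; exact norm_mul_le _ _
      _ ≤ ‖w‖ := mul_le_of_le_one_left (norm_nonneg _) (hd ▸ norm_cfc_div_add_le_one hb hδ)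
  · have hsq : ‖y - e * y‖ * ‖y - e * y‖ ≤ δ / 4 := by
      calc ‖y - e * y‖ * ‖y - e * y‖ = ‖d * (y : A⁺¹) * star (d * (y : A⁺¹))‖ := by
            rw [← hmul, CStarRing.norm_self_mul_star, norm_inr]
        _ = ‖d * b * d‖ := by
            have hb' : b = (y : A⁺¹) * star (y : A⁺¹) := by rw [← inr_star, ← inr_mul]
            rw [star_mul, (hd ▸ cfc_predicate _ b : IsSelfAdjoint d).star_eq, hb']
            simp only [mul_assoc]
        _ ≤ δ / 4 := hd ▸ norm_cfc_div_add_mul_mul_le hb hδ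
    nlinarith [norm_nonneg (y - e * y)]

theorem infDist_inter_le_norm_sub {I J : TwoSidedIdeal A} {y z : A} (hy : y ∈ I) (hz : z ∈ J) :
    infDist z ((I : Set A) ∩ J) ≤ ‖z - y‖ := by
  refine le_of_forall_pos_le_add fun ε hε => ?_
  obtain ⟨e, heI, he_le, hey⟩ := I.exists_mem_norm_sub_mul_le hy hε
  calc infDist z ((I : Set A) ∩ J) ≤ ‖z - e * z‖ := by
        rw [← dist_eq_norm]
        exact infDist_le_dist_of_mem ⟨I.mul_mem_right _ _ heI, J.mul_mem_left _ _ hz⟩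
    _ = ‖((z - y) - e * (z - y)) + (y - e * y)‖ := by rw [mul_sub]; congr 1; abel
    _ ≤ ‖z - y‖ + ε := (norm_add_le _ _).trans (add_le_add (he_le _) hey)

theorem isClosed_sup {I J : TwoSidedIdeal A} (hI : IsClosed (I : Set A))
    (hJ : IsClosed (J : Set A)) : IsClosed ((I ⊔ J : TwoSidedIdeal A) : Set A) := by
  have hsup : ((I ⊔ J : TwoSidedIdeal A) : Set A) =
      (AddSubgroup.ofClass I ⊔ AddSubgroup.ofClass J : AddSubgroup A) := by
    ext x
    simp only [SetLike.mem_coe, mem_sup, AddSubgroup.mem_sup]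
    rfl
  rw [hsup]
  refine AddSubgroup.isClosed_sup_of_infDist_le hI hJ fun z hz => ?_
  refine (le_infDist ⟨0, zero_mem _⟩).2 fun y hy => ?_
  rw [dist_eq_norm]
  exact infDist_inter_le_norm_sub hy hz

theorem coe_inf_sup_subset_closure (I J K : TwoSidedIdeal A) :
    ((I ⊓ (J ⊔ K) : TwoSidedIdeal A) : Set A) ⊆ closure ((I ⊓ J) ⊔ K : TwoSidedIdeal A) := by
  intro u hu
  obtain ⟨huI, huJK⟩ := (mem_inf A).1 hu
  obtain ⟨v, hv, k, hk, rfl⟩ := mem_sup.1 huJK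
  refine Metric.mem_closure_iff.2 fun ε hε => ?_
  obtain ⟨e, heJ, -, hev⟩ := J.exists_mem_norm_sub_mul_le hv (half_pos hε)
  refine ⟨e * (v + k) + (k - e * k), add_mem _ (mem_sup_left ((mem_inf A).2
    ⟨I.mul_mem_left _ _ huI, J.mul_mem_right _ _ heJ⟩)) (mem_sup_right (sub_mem _ hk
    (K.mul_mem_left _ _ hk))), ?_⟩
  rw [dist_eq_norm, show v + k - (e * (v + k) + (k - e * k)) = v - e * v by noncomm_ring]
  exact hev.trans_lt (half_lt_self hε)

theorem isClosed_inf {I J : TwoSidedIdeal A} (hI : IsClosed (I : Set A))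
    (hJ : IsClosed (J : Set A)) : IsClosed ((I ⊓ J : TwoSidedIdeal A) : Set A) := by
  convert hI.inter hJ using 1
  ext x
  exact mem_inf A

theorem sup_inf_sup_le {I J K : TwoSidedIdeal A} (hI : IsClosed (I : Set A))
    (hJ : IsClosed (J : Set A)) (hK : IsClosed (K : Set A)) :
    (I ⊔ K) ⊓ (J ⊔ K) ≤ (I ⊓ J) ⊔ K := by
  intro x hx
  obtain ⟨hxIK, hxJK⟩ := (mem_inf A).1 hx
  obtain ⟨u, hu, k, hk, rfl⟩ := mem_sup.1 hxIK
  have huJK : u ∈ J ⊔ K := by simpa using sub_mem _ hxJK (mem_sup_right hk)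
  have hu' : u ∈ (I ⊓ J) ⊔ K := (isClosed_sup (isClosed_inf hI hJ) hK).closure_subset
    (coe_inf_sup_subset_closure I J K ((mem_inf A).2 ⟨hu, huJK⟩))
  exact add_mem _ hu' (mem_sup_right hk)

variable {ι : Type*} {J : ι → TwoSidedIdeal A}

theorem mem_finsetInf {s : Finset ι} {x : A} : x ∈ s.inf J ↔ ∀ i ∈ s, x ∈ J i := by
  classical
  induction s using Finset.induction_on with
  | empty => simp [mem_top]
  | insert i s _ ih => simp [Finset.inf_insert, mem_inf, ih]

theorem isClosed_finsetInf (hJ : ∀ i, IsClosed (J i : Set A)) (s : Finset ι) :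
    IsClosed ((s.inf J : TwoSidedIdeal A) : Set A) := by
  convert isClosed_biInter fun i (_ : i ∈ s) => hJ i using 1
  ext x
  simp [mem_finsetInf]

theorem finsetInf_sup_le (hJ : ∀ i, IsClosed (J i : Set A)) {K : TwoSidedIdeal A}
    (hK : IsClosed (K : Set A)) (s : Finset ι) :
    s.inf (fun i => J i ⊔ K) ≤ s.inf J ⊔ K := by
  classical
  induction s using Finset.induction_on with
  | empty => exact le_sup_left
  | insert i s _ ih =>
    rw [Finset.inf_insert, Finset.inf_insert]
    exact (inf_le_inf_left _ ih).trans (sup_inf_sup_le (hJ i) (isClosed_finsetInf hJ s) hK)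

theorem exists_forall_sub_mem_of_sub_mem_sup (hJ : ∀ i, IsClosed (J i : Set A)) {b : ι → A}
    (hb : ∀ i j, b i - b j ∈ J i ⊔ J j) (s : Finset ι) :
    ∃ a, ∀ i ∈ s, a - b i ∈ J i := by
  classical
  induction s using Finset.induction_on with
  | empty => exact ⟨0, by simp⟩
  | insert p s _ ih =>
    obtain ⟨a, ha⟩ := ih
    have hap : a - b p ∈ s.inf fun i => J i ⊔ J p := by
      refine mem_finsetInf.2 fun i hi => ?_
      rw [← sub_add_sub_cancel a (b i)]
      exact add_mem _ (mem_sup_left (ha i hi)) (hb i p)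
    obtain ⟨u, hu, v, hv, huv⟩ := mem_sup.1 (finsetInf_sup_le hJ (hJ p) s hap)
    refine ⟨a - u, Finset.forall_mem_insert .. |>.2 ⟨?_, fun i hi => ?_⟩⟩
    · rwa [sub_right_comm, ← huv, add_sub_cancel_left]
    · rw [sub_right_comm]
      exact sub_mem _ (ha i hi) (mem_finsetInf.1 hu i hi)

end TwoSidedIdeal

theorem statement2_general
    {A : Type*} [NonUnitalCStarAlgebra A]
    (n : ℕ)
    (J : Fin n → TwoSidedIdeal A)
    (hJclosed : ∀ i, IsClosed ((J i : Set A)))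
    (hJinter : ∀ a : A, (∀ i, a ∈ J i) → a = 0) :
    -- each `J i + J j` is a closed two-sided ideal:
    (∀ i j, IsClosed (((J i ⊔ J j : TwoSidedIdeal A) : Set A))) ∧
    -- gluing of elements, and uniqueness:
    (∀ b : Fin n → A,
      ((∃ a : A, ∀ i, a - b i ∈ J i) ↔ (∀ i j, b i - b j ∈ J i ⊔ J j)) ∧
      (∀ a a' : A, (∀ i, a - b i ∈ J i) → (∀ i, a' - b i ∈ J i) → a = a')) := by
  refine ⟨fun i j => TwoSidedIdeal.isClosed_sup (hJclosed i) (hJclosed j),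
    fun b => ⟨⟨?_, fun hb => ?_⟩, ?_⟩⟩
  · rintro ⟨a, ha⟩ i j
    rw [← sub_sub_sub_cancel_left (b j) (b i) a]
    exact sub_mem (TwoSidedIdeal.mem_sup_right (ha j)) (TwoSidedIdeal.mem_sup_left (ha i))
  · obtain ⟨a, ha⟩ := TwoSidedIdeal.exists_forall_sub_mem_of_sub_mem_sup hJclosed hb Finset.univ
    exact ⟨a, fun i => ha i (Finset.mem_univ i)⟩
  · intro a a' ha ha'
    refine sub_eq_zero.1 (hJinter _ fun i => ?_)
    rw [← sub_sub_sub_cancel_right a a' (b i)]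
    exact sub_mem (ha i) (ha' i)

theorem statement2
    {A : Type*} [NonUnitalCStarAlgebra A]
    (n : ℕ) (hn : 1 ≤ n)
    (J : Fin n → TwoSidedIdeal A)
    (hJclosed : ∀ i, IsClosed ((J i : Set A)))
    (hJinter : ∀ a : A, (∀ i, a ∈ J i) → a = 0) :
    -- each `J i + J j` is a closed two-sided ideal:
    (∀ i j, IsClosed (((J i ⊔ J j : TwoSidedIdeal A) : Set A))) ∧
    -- gluing of elements, and uniqueness:
    (∀ b : Fin n → A,
      ((∃ a : A, ∀ i, a - b i ∈ J i) ↔ (∀ i j, b i - b j ∈ J i ⊔ J j)) ∧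
      (∀ a a' : A, (∀ i, a - b i ∈ J i) → (∀ i, a' - b i ∈ J i) → a = a')) :=
  statement2_general n J hJclosed hJinter
end

section
/- Let A be a C*-algebra, let X be a right Hilbert C*-module over A, let n ≥ 1, and let J_1, …, J_n be closed two-sided ideals of A with J_1 ∩ ⋯ ∩ J_n = {0}. For a closed two-sided ideal K of A let X·K denote the closed linear span of {x·k : x ∈ X, k ∈ K}; since X·J_i ⊆ X·(J_i + J_j), there are canonical quotient maps X/(X·J_i) → X/(X·(J_i + J_j)). Then for every n-tuple (x_1, …, x_n) with x_i ∈ X/(X·J_i), the following are equivalent: (1) there exists x ∈ X whose class in X/(X·J_i) equals x_i for every i; (2) for all pairs (i,j), the images of x_i and x_j under the canonical quotient maps into X/(X·(J_i + J_j)) coincide. Moreover, when such x exists it is unique. -/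
open Metric Filter Topology
open scoped RightActions

/-- The December 2024 Mathlib `CStarModule` (right Hilbert C⋆-module, right action by `Aᵐᵒᵖ`),
restated here because Mathlib's `CStarModule` is now a left module. -/
class RightCStarModule (A : Type*) (E : Type*) [NonUnitalSemiring A] [StarRing A]
    [Module ℂ A] [AddCommGroup E] [Module ℂ E] [PartialOrder A] [SMul Aᵐᵒᵖ E] [Norm A] [Norm E]
    extends Inner A E where
  inner_add_right {x} {y} {z} : inner x (y + z) = inner x y + inner x z
  inner_self_nonneg {x} : 0 ≤ inner x x
  inner_self {x} : inner x x = 0 ↔ x = 0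
  inner_op_smul_right {a : A} {x y : E} : inner x (y <• a) = inner x y * a
  inner_smul_right_complex {z : ℂ} {x} {y} : inner x (z • y) = z • inner x y
  star_inner x y : star (inner x y) = inner y x
  norm_eq_sqrt_norm_inner_self x : ‖x‖ = √‖inner x x‖

/-- `X·S`: the closed `ℂ`-linear span of `{x <• k : k ∈ S, x ∈ X}`. -/
noncomputable def smulIdealSpan {A : Type*} [NonUnitalCStarAlgebra A]
    (X : Type*) [NormedAddCommGroup X] [Module ℂ X] [SMul Aᵐᵒᵖ X]
    (S : Set A) : Set X :=
  closure (Submodule.span ℂ {z : X | ∃ k ∈ S, ∃ x : X, z = x <• k} : Set X)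

/-!
Uniqueness: the difference `d` of two solutions has `⟨d, d⟩ ∈ ⋂ J i = 0`. Existence is by
induction on the ideals. If `y` glues `b` on `s` and `l ∉ s`, then `z = y - b l` lies in every
`X·(J i + J l)`, so `⟨z, z⟩` lies in every `closure (J i + J l)` and hence in
`closure ((⋂ J i) + J l)`. Such a `z` splits as `u + v` with `u ∈ X·(⋂ J i)` and `v ∈ X·J l`,
and `y - u` glues `b` on `insert l s`.

The analytic input is the approximate unit `f_ε(a⋆a)`, `f_ε(t) = t / (|t| + ε²)`, for which
`‖a - a f_ε(a⋆a)‖ ≤ ε`. It makes closed two-sided ideals closed under scalars and adjoints, gives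
`closure I ∩ closure K ⊆ closure (I K)`, and produces approximate splittings of `z` with norm
control, which are then summed to an exact splitting.
-/

section ApproxUnit

variable {A : Type*} [NonUnitalCStarAlgebra A]

noncomputable def approxUnitFun (ε t : ℝ) : ℝ := t * (|t| + ε ^ 2)⁻¹

lemma continuous_approxUnitFun {ε : ℝ} (hε : 0 < ε) : Continuous (approxUnitFun ε) :=
  continuous_id.mul <| (continuous_abs.add continuous_const).inv₀ fun _ =>
    (add_pos_of_nonneg_of_pos (abs_nonneg _) (pow_pos hε 2)).ne'

@[simp]
lemma approxUnitFun_zero (ε : ℝ) : approxUnitFun ε 0 = 0 := by simp [approxUnitFun]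

lemma abs_approxUnitFun_le_one {ε : ℝ} (hε : 0 < ε) (t : ℝ) : |approxUnitFun ε t| ≤ 1 := by
  have : 0 < |t| + ε ^ 2 := by positivity
  rw [approxUnitFun, abs_mul, abs_inv, abs_of_pos this, ← div_eq_mul_inv]
  exact div_le_one_of_le₀ (by linarith [sq_nonneg ε]) this.le

lemma norm_cfcₙ_approxUnitFun_le_one {ε : ℝ} (hε : 0 < ε) (h : A) :
    ‖cfcₙ (approxUnitFun ε) h‖ ≤ 1 :=
  norm_cfcₙ_le fun t _ => by rw [Real.norm_eq_abs]; exact abs_approxUnitFun_le_one hε t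

variable [PartialOrder A] [StarOrderedRing A]

/-- For `h ≥ 0` and `c = f(h)` this is `h (1 - c)²`, whose spectrum lies in
`{t ε⁴ / (t + ε²)² | t ≥ 0} ⊆ [0, ε² / 4]`. -/
lemma norm_sub_cfcₙ_approxUnitFun_le {ε : ℝ} (hε : 0 < ε) {h : A} (hh : 0 ≤ h) :
    ‖h - h * cfcₙ (approxUnitFun ε) h - cfcₙ (approxUnitFun ε) h * h +
      cfcₙ (approxUnitFun ε) h * h * cfcₙ (approxUnitFun ε) h‖ ≤ ε ^ 2 := by
  set f := approxUnitFun ε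
  have hf : ContinuousOn f (quasispectrum ℝ h) := (continuous_approxUnitFun hε).continuousOn
  have hid : ContinuousOn (fun t : ℝ => t) (quasispectrum ℝ h) := continuousOn_id
  have hf0 : f 0 = 0 := approxUnitFun_zero ε
  have hcomp : cfcₙ (fun t => t - t * f t - f t * t + f t * t * f t) h =
      h - h * cfcₙ f h - cfcₙ f h * h + cfcₙ f h * h * cfcₙ f h := by
    rw [cfcₙ_add (fun t => t - t * f t - f t * t) (fun t => f t * t * f t) h
        ((hid.sub (hid.mul hf)).sub (hf.mul hid)) (by simp [hf0]) ((hf.mul hid).mul hf)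
        (by simp [hf0]),
      cfcₙ_sub (fun t => t - t * f t) (fun t => f t * t) h (hid.sub (hid.mul hf))
        (by simp [hf0]) (hf.mul hid) (by simp [hf0]),
      cfcₙ_sub (fun t => t) (fun t => t * f t) h hid rfl (hid.mul hf) (by simp [hf0]),
      cfcₙ_mul (fun t => f t * t) f h (hf.mul hid) (by simp [hf0]) hf hf0,
      cfcₙ_mul f (fun t => t) h hf hf0 hid rfl, cfcₙ_mul (fun t => t) f h hid rfl hf hf0,
      cfcₙ_id' ℝ h]
  rw [← hcomp]
  refine norm_cfcₙ_le fun t ht => ?_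
  have ht0 : 0 ≤ t := quasispectrum_nonneg_of_nonneg h hh t ht
  have hpos : 0 < t + ε ^ 2 := by positivity
  have hval : t - t * f t - f t * t + f t * t * f t = t * ε ^ 4 / (t + ε ^ 2) ^ 2 := by
    simp only [f, approxUnitFun, abs_of_nonneg ht0]
    field_simp
    ring
  rw [hval, Real.norm_of_nonneg (by positivity), div_le_iff₀ (by positivity)]
  nlinarith [sq_nonneg (t - ε ^ 2), mul_nonneg ht0 (sq_nonneg ε)]

lemma norm_sub_mul_cfcₙ_approxUnitFun_le {ε : ℝ} (hε : 0 < ε) (a : A) :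
    ‖a - a * cfcₙ (approxUnitFun ε) (star a * a)‖ ≤ ε := by
  set c := cfcₙ (approxUnitFun ε) (star a * a)
  have hc : IsSelfAdjoint c := IsSelfAdjoint.cfcₙ
  have hsq : ‖a - a * c‖ ^ 2 =
      ‖star a * a - star a * a * c - c * (star a * a) + c * (star a * a) * c‖ := by
    rw [sq, ← CStarRing.norm_star_mul_self, star_sub, star_mul, hc.star_eq]
    noncomm_ring
  refine (pow_le_pow_iff_left₀ (norm_nonneg _) hε.le two_ne_zero).mp ?_
  rw [hsq]
  exact norm_sub_cfcₙ_approxUnitFun_le hε (star_mul_self_nonneg a)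

lemma tendsto_mul_cfcₙ_approxUnitFun (a : A) :
    Tendsto (fun n : ℕ => a * cfcₙ (approxUnitFun (1 / (n + 1))) (star a * a)) atTop (𝓝 a) := by
  rw [tendsto_iff_norm_sub_tendsto_zero]
  refine squeeze_zero (fun _ => norm_nonneg _) (fun n => ?_)
    tendsto_one_div_add_atTop_nhds_zero_nat
  rw [norm_sub_rev]
  exact norm_sub_mul_cfcₙ_approxUnitFun_le (by positivity) a

end ApproxUnit

namespace TwoSidedIdeal

section

variable {R : Type*} [NonUnitalNonAssocRing R]

lemma mem_biInf {ι : Type*} {J : ι → TwoSidedIdeal R} {s : Set ι} {a : R} :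
    a ∈ ⨅ i ∈ s, J i ↔ ∀ i ∈ s, a ∈ J i := by
  rw [mem_iInf]
  exact forall_congr' fun i => by by_cases hi : i ∈ s <;> simp [hi]

variable [TopologicalSpace R]

lemma isClosed_biInf {ι : Type*} {J : ι → TwoSidedIdeal R} (hJ : ∀ i, IsClosed (J i : Set R))
    (s : Set ι) : IsClosed ((⨅ i ∈ s, J i : TwoSidedIdeal R) : Set R) := by
  have : ((⨅ i ∈ s, J i : TwoSidedIdeal R) : Set R) = ⋂ i ∈ s, (J i : Set R) := by
    ext; simp [mem_biInf]
  rw [this]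
  exact isClosed_biInter fun i _ => hJ i

variable [IsTopologicalRing R] {I : TwoSidedIdeal R}

def topologicalClosure (I : TwoSidedIdeal R) : TwoSidedIdeal R :=
  .mk' (closure (I : Set R)) (subset_closure I.zero_mem)
    (fun hx hy => map_mem_closure₂ continuous_add hx hy fun _ ha _ hb => I.add_mem ha hb)
    (fun hx => map_mem_closure continuous_neg hx fun _ hb => I.neg_mem hb)
    (fun {x _} hy => map_mem_closure (continuous_const_mul x) hy fun _ hb => I.mul_mem_left x _ hb)
    (fun {_ y} hx => map_mem_closure (f := (· * y)) (continuous_mul_const y) hx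
      fun _ hb => I.mul_mem_right _ y hb)

@[simp]
lemma mem_topologicalClosure {a : R} : a ∈ I.topologicalClosure ↔ a ∈ closure (I : Set R) :=
  mem_mk' _ _ _ _ _ _ _

@[simp]
lemma coe_topologicalClosure : (I.topologicalClosure : Set R) = closure (I : Set R) :=
  coe_mk' _ _ _ _ _ _

lemma isClosed_topologicalClosure : IsClosed (I.topologicalClosure : Set R) := by
  rw [coe_topologicalClosure]; exact isClosed_closure

end

variable {A : Type*} [NonUnitalCStarAlgebra A] [PartialOrder A] [StarOrderedRing A]
  {I : TwoSidedIdeal A}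

lemma smul_mem_of_isClosed {R : Type*} [SMul R A] [SMulCommClass R A A] [ContinuousConstSMul R A]
    (hI : IsClosed (I : Set A)) (r : R) {a : A} (ha : a ∈ I) : r • a ∈ I := by
  have h := (tendsto_mul_cfcₙ_approxUnitFun a).const_smul r
  simp_rw [← mul_smul_comm] at h
  exact hI.mem_of_tendsto h (.of_forall fun _ => I.mul_mem_right _ _ ha)

/-- Writing `t g(t) = g(0) t + t (g(t) - g(0))` avoids applying the non-unital calculus to `g`. -/
lemma cfcₙ_mul_mem_of_isClosed (hI : IsClosed (I : Set A)) {h : A} (hh : IsSelfAdjoint h)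
    (hhI : h ∈ I) {g : ℝ → ℝ} (hg : Continuous g) : cfcₙ (fun t => t * g t) h ∈ I := by
  have hsplit : (fun t => t * g t) = fun t => t * (g t - g 0) + g 0 * t := by
    funext t; ring
  rw [hsplit, cfcₙ_add (fun t => t * (g t - g 0)) (fun t => g 0 * t) h (by fun_prop) (by simp),
    cfcₙ_mul (fun t => t) (fun t => g t - g 0) h (by fun_prop) rfl (by fun_prop) (by simp),
    cfcₙ_const_mul_id (g 0) h, cfcₙ_id' ℝ h]
  exact I.add_mem (I.mul_mem_right _ _ hhI) (smul_mem_of_isClosed hI _ hhI)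

lemma cfcₙ_approxUnitFun_mem_of_isClosed (hI : IsClosed (I : Set A)) {h : A}
    (hh : IsSelfAdjoint h) (hhI : h ∈ I) {ε : ℝ} (hε : 0 < ε) :
    cfcₙ (approxUnitFun ε) h ∈ I :=
  cfcₙ_mul_mem_of_isClosed hI hh hhI <| continuous_abs.add continuous_const |>.inv₀ fun _ =>
    (add_pos_of_nonneg_of_pos (abs_nonneg _) (pow_pos hε 2)).ne'

lemma star_mem_of_isClosed (hI : IsClosed (I : Set A)) {a : A} (ha : a ∈ I) : star a ∈ I := by
  have h := tendsto_mul_cfcₙ_approxUnitFun (star a)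
  rw [star_star] at h
  refine hI.mem_of_tendsto h (.of_forall fun n => I.mul_mem_left _ _ ?_)
  exact cfcₙ_approxUnitFun_mem_of_isClosed hI (mul_star_self_nonneg a).isSelfAdjoint
    (I.mul_mem_right _ _ ha) (by positivity)

lemma mem_closure_of_mul_mem {I K L : TwoSidedIdeal A} (hIKL : ∀ s ∈ I, ∀ t ∈ K, s * t ∈ L)
    {a : A} (haI : a ∈ closure (I : Set A)) (haK : a ∈ closure (K : Set A)) :
    a ∈ closure (L : Set A) := by
  refine isClosed_closure.mem_of_tendsto (tendsto_mul_cfcₙ_approxUnitFun a)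
    (.of_forall fun n => ?_)
  have he : cfcₙ (approxUnitFun (1 / (n + 1))) (star a * a) ∈ closure (K : Set A) := by
    rw [← mem_topologicalClosure]
    exact cfcₙ_approxUnitFun_mem_of_isClosed isClosed_topologicalClosure
      (star_mul_self_nonneg a).isSelfAdjoint
      (mul_mem_left _ _ _ (mem_topologicalClosure.mpr haK)) (by positivity)
  exact map_mem_closure₂ continuous_mul haI he hIKL

lemma mem_closure_inf_sup {P₁ P₂ Q : TwoSidedIdeal A} {a : A}
    (h₁ : a ∈ closure ((P₁ ⊔ Q : TwoSidedIdeal A) : Set A))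
    (h₂ : a ∈ closure ((P₂ ⊔ Q : TwoSidedIdeal A) : Set A)) :
    a ∈ closure ((P₁ ⊓ P₂ ⊔ Q : TwoSidedIdeal A) : Set A) := by
  refine mem_closure_of_mul_mem (fun s hs t ht => ?_) h₁ h₂
  obtain ⟨p, hp, q, hq, rfl⟩ := mem_sup.mp hs
  obtain ⟨p', hp', q', hq', rfl⟩ := mem_sup.mp ht
  rw [show (p + q) * (p' + q') = p * p' + (p * q' + q * (p' + q')) by noncomm_ring]
  exact mem_sup.mpr ⟨_, ⟨mul_mem_right _ _ _ hp, mul_mem_left _ _ _ hp'⟩, _,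
    Q.add_mem (mul_mem_left _ _ _ hq') (mul_mem_right _ _ _ hq), rfl⟩

lemma mem_closure_biInf_sup {ι : Type*} (P : ι → TwoSidedIdeal A) (Q : TwoSidedIdeal A) {a : A}
    (s : Finset ι) (h : ∀ i ∈ s, a ∈ closure ((P i ⊔ Q : TwoSidedIdeal A) : Set A)) :
    a ∈ closure (((⨅ i ∈ s, P i) ⊔ Q : TwoSidedIdeal A) : Set A) := by
  classical
  induction s using Finset.induction_on with
  | empty => simp
  | insert j s _ ih =>
    rw [Finset.iInf_insert]
    exact mem_closure_inf_sup (h j (s.mem_insert_self j))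
      (ih fun i hi => h i (Finset.mem_insert_of_mem hi))

/-- The bound on `p` is the point: `p = c e` for an approximate unit `e ∈ P` of the
`P`-component of a nearby element of `P + Q`. -/
lemma exists_near_add_of_mem_closure_sup {P Q : TwoSidedIdeal A} (hP : IsClosed (P : Set A))
    {c : A} (hc : c ∈ closure ((P ⊔ Q : TwoSidedIdeal A) : Set A)) {ε : ℝ} (hε : 0 < ε) :
    ∃ p ∈ P, ∃ q ∈ Q, ‖c - p - q‖ < ε ∧ ‖p‖ ≤ ‖c‖ ∧ ‖q‖ ≤ 2 * ‖c‖ + ε := by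
  obtain ⟨d, hd, hcd⟩ := Metric.mem_closure_iff.mp hc (ε / 4) (by positivity)
  obtain ⟨p₀, hp₀, q₀, hq₀, rfl⟩ := mem_sup.mp hd
  rw [dist_eq_norm] at hcd
  set e := cfcₙ (approxUnitFun (ε / 4)) (star p₀ * p₀)
  have heP : e ∈ P := cfcₙ_approxUnitFun_mem_of_isClosed hP
    (star_mul_self_nonneg p₀).isSelfAdjoint (P.mul_mem_left _ _ hp₀) (by positivity)
  have he : ‖e‖ ≤ 1 := norm_cfcₙ_approxUnitFun_le_one (by positivity) _
  have hp₀e : ‖p₀ - p₀ * e‖ ≤ ε / 4 := norm_sub_mul_cfcₙ_approxUnitFun_le (by positivity) p₀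
  have hsub (x : A) : ‖x - x * e‖ ≤ 2 * ‖x‖ :=
    calc ‖x - x * e‖ ≤ ‖x‖ + ‖x‖ * ‖e‖ := (norm_sub_le _ _).trans (by gcongr; exact norm_mul_le _ _)
      _ ≤ 2 * ‖x‖ := by nlinarith [norm_nonneg x]
  have herr : ‖c - c * e - (q₀ - q₀ * e)‖ < 3 * ε / 4 :=
    calc ‖c - c * e - (q₀ - q₀ * e)‖
        = ‖(c - (p₀ + q₀)) - (c - (p₀ + q₀)) * e + (p₀ - p₀ * e)‖ := by congr 1; noncomm_ring
      _ ≤ 2 * ‖c - (p₀ + q₀)‖ + ε / 4 := (norm_add_le _ _).trans (add_le_add (hsub _) hp₀e)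
      _ < 3 * ε / 4 := by linarith
  refine ⟨c * e, P.mul_mem_left _ _ heP, q₀ - q₀ * e, Q.sub_mem hq₀ (Q.mul_mem_right _ _ hq₀),
    by linarith, (norm_mul_le _ _).trans (mul_le_of_le_one_right (norm_nonneg _) he), ?_⟩
  calc ‖q₀ - q₀ * e‖ = ‖(c - c * e) - (c - c * e - (q₀ - q₀ * e))‖ := by congr 1; abel
    _ ≤ 2 * ‖c‖ + 3 * ε / 4 := (norm_sub_le _ _).trans (add_le_add (hsub c) herr.le)
    _ ≤ 2 * ‖c‖ + ε := by linarith

end TwoSidedIdeal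

lemma exists_eq_add_of_tendsto_sum {E : Type*} [NormedAddCommGroup E] [CompleteSpace E]
    {U V : AddSubgroup E} (hU : IsClosed (U : Set E)) (hV : IsClosed (V : Set E))
    {u v : ℕ → E} (hu : ∀ k, u k ∈ U) (hv : ∀ k, v k ∈ V)
    (hu_sum : Summable fun k => ‖u k‖) (hv_sum : Summable fun k => ‖v k‖) {z : E}
    (hz : Tendsto (fun k => ∑ i ∈ Finset.range k, (u i + v i)) atTop (𝓝 z)) :
    ∃ u ∈ U, ∃ v ∈ V, z = u + v := by
  have hu' := (Summable.of_norm hu_sum).hasSum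
  have hv' := (Summable.of_norm hv_sum).hasSum
  refine ⟨_, hU.mem_of_tendsto hu'.tendsto_sum_nat (.of_forall fun _ => U.sum_mem fun i _ => hu i),
    _, hV.mem_of_tendsto hv'.tendsto_sum_nat (.of_forall fun _ => V.sum_mem fun i _ => hv i),
    tendsto_nhds_unique hz ?_⟩
  simpa only [Finset.sum_add_distrib] using (hu'.add hv').tendsto_sum_nat

/-- Iterate the approximate decomposition on the error terms with `ε = 2⁻ᵏ⁻¹`; the norm control
makes the pieces absolutely summable. -/
lemma exists_eq_add_of_forall_approx {E : Type*} [NormedAddCommGroup E] [CompleteSpace E]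
    {U V : AddSubgroup E} (hU : IsClosed (U : Set E)) (hV : IsClosed (V : Set E))
    {D : Set E} {C : ℝ}
    (happrox : ∀ w ∈ D, ∀ ε > 0, ∃ u ∈ U, ∃ v ∈ V,
      w - u - v ∈ D ∧ ‖w - u - v‖ < ε ∧ ‖u‖ ≤ C * ‖w‖ + ε ∧ ‖v‖ ≤ C * ‖w‖ + ε)
    {z : E} (hz : z ∈ D) : ∃ u ∈ U, ∃ v ∈ V, z = u + v := by
  have happrox' : ∀ w ∈ D, ∀ k : ℕ, ∃ u ∈ U, ∃ v ∈ V, w - u - v ∈ D ∧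
      ‖w - u - v‖ < (1 / 2) ^ (k + 1) ∧ ‖u‖ ≤ C * ‖w‖ + (1 / 2) ^ (k + 1) ∧
      ‖v‖ ≤ C * ‖w‖ + (1 / 2) ^ (k + 1) :=
    fun w hw k => happrox w hw _ (by positivity)
  choose! u hu v hv hD hsmall hu_le hv_le using happrox'
  let w : ℕ → E := fun k => Nat.rec z (fun k wk => wk - u wk k - v wk k) k
  have hw_zero : w 0 = z := rfl
  have hw_succ (k : ℕ) : w (k + 1) = w k - u (w k) k - v (w k) k := rfl
  have hwD (k : ℕ) : w k ∈ D := by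
    induction k with
    | zero => exact hz
    | succ k ih => rw [hw_succ]; exact hD _ ih k
  have hw_le (k : ℕ) : ‖w k‖ ≤ (‖z‖ + 1) * (1 / 2) ^ k := by
    cases k with
    | zero => simp [hw_zero]
    | succ k =>
      rw [hw_succ]
      nlinarith [hsmall _ (hwD k) k, norm_nonneg z, pow_pos (one_half_pos (α := ℝ)) (k + 1)]
  have hgeom : Summable fun k : ℕ => ((1 : ℝ) / 2) ^ k :=
    summable_geometric_of_lt_one (by norm_num) (by norm_num)
  have hbound : Summable fun k => C * ‖w k‖ + (1 / 2) ^ (k + 1) :=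
    ((Summable.of_nonneg_of_le (fun _ => norm_nonneg _) hw_le (hgeom.mul_left _)).mul_left C).add
      ((summable_nat_add_iff 1).mpr hgeom)
  have hpartial (k : ℕ) : ∑ i ∈ Finset.range k, (u (w i) i + v (w i) i) = z - w k := by
    induction k with
    | zero => simp [hw_zero]
    | succ k ih => rw [Finset.sum_range_succ, ih, hw_succ]; abel
  have hw_tendsto : Tendsto w atTop (𝓝 0) :=
    squeeze_zero_norm hw_le <| by
      simpa using (tendsto_pow_atTop_nhds_zero_of_lt_one (r := (1 : ℝ) / 2) (by norm_num)
        (by norm_num)).const_mul (‖z‖ + 1)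
  refine exists_eq_add_of_tendsto_sum hU hV (fun k => hu _ (hwD k) k) (fun k => hv _ (hwD k) k)
    (hbound.of_nonneg_of_le (fun _ => norm_nonneg _) fun k => hu_le _ (hwD k) k)
    (hbound.of_nonneg_of_le (fun _ => norm_nonneg _) fun k => hv_le _ (hwD k) k) ?_
  simp_rw [hpartial]
  simpa using (tendsto_const_nhds (x := z)).sub hw_tendsto

section smulIdealSpan

variable {A : Type*} [NonUnitalCStarAlgebra A]
  {X : Type*} [NormedAddCommGroup X] [Module ℂ X] [SMul Aᵐᵒᵖ X]

variable (X) in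
def smulIdealSpanAddSubgroup (S : Set A) : AddSubgroup X :=
  (Submodule.span ℂ {z : X | ∃ k ∈ S, ∃ x : X, z = x <• k}).toAddSubgroup.topologicalClosure

lemma isClosed_smulIdealSpan (S : Set A) : IsClosed (smulIdealSpan X S) :=
  isClosed_closure

lemma add_mem_smulIdealSpan {S : Set A} {x y : X} (hx : x ∈ smulIdealSpan X S)
    (hy : y ∈ smulIdealSpan X S) : x + y ∈ smulIdealSpan X S :=
  (smulIdealSpanAddSubgroup X S).add_mem hx hy

lemma sub_mem_smulIdealSpan {S : Set A} {x y : X} (hx : x ∈ smulIdealSpan X S)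
    (hy : y ∈ smulIdealSpan X S) : x - y ∈ smulIdealSpan X S :=
  (smulIdealSpanAddSubgroup X S).sub_mem hx hy

lemma smulIdealSpan_mono {S T : Set A} (h : S ⊆ T) : smulIdealSpan X S ⊆ smulIdealSpan X T :=
  closure_mono <| Submodule.span_mono fun _ ⟨k, hk, x, hz⟩ => ⟨k, h hk, x, hz⟩

lemma op_smul_mem_smulIdealSpan {S : Set A} {k : A} (hk : k ∈ S) (x : X) :
    x <• k ∈ smulIdealSpan X S :=
  subset_closure <| Submodule.subset_span ⟨k, hk, x, rfl⟩

lemma sub_mem_smulIdealSpan_sup {I K : TwoSidedIdeal A} {x y z : X}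
    (hx : x - y ∈ smulIdealSpan X (I : Set A)) (hz : x - z ∈ smulIdealSpan X (K : Set A)) :
    y - z ∈ smulIdealSpan X ((I ⊔ K : TwoSidedIdeal A) : Set A) := by
  have h := sub_mem_smulIdealSpan
    (smulIdealSpan_mono (fun _ => TwoSidedIdeal.mem_sup_right (I := I)) hz)
    (smulIdealSpan_mono (fun _ => TwoSidedIdeal.mem_sup_left (J := K)) hx)
  rwa [sub_sub_sub_cancel_left] at h

end smulIdealSpan

namespace RightCStarModule

variable {A : Type*} [NonUnitalCStarAlgebra A] [PartialOrder A]
  {X : Type*} [NormedAddCommGroup X] [Module ℂ X] [SMul Aᵐᵒᵖ X] [RightCStarModule A X]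

@[simp]
lemma inner_zero_right {x : X} : inner A x (0 : X) = 0 := by
  simpa using inner_add_right (A := A) (x := x) (y := (0 : X)) (z := 0)

lemma inner_sub_right {x y z : X} : inner A x (y - z) = inner A x y - inner A x z := by
  rw [eq_sub_iff_add_eq, ← inner_add_right, sub_add_cancel]

lemma inner_sub_left {x y z : X} : inner A (x - y) z = inner A x z - inner A y z := by
  rw [← star_inner, inner_sub_right, star_sub, star_inner, star_inner]

lemma inner_op_smul_left {a : A} {x y : X} : inner A (x <• a) y = star a * inner A x y := by
  rw [← star_inner, inner_op_smul_right, star_mul, star_inner]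

lemma inner_smul_right_real {r : ℝ} {x y : X} : inner A x (r • y) = r • inner A x y := by
  rw [← Complex.coe_smul, inner_smul_right_complex, Complex.coe_smul]

lemma inner_smul_left_real {r : ℝ} {x y : X} : inner A (r • x) y = r • inner A x y := by
  rw [← star_inner, inner_smul_right_real, star_smul, star_trivial, star_inner]

lemma norm_sq_eq_norm_inner_self (x : X) : ‖x‖ ^ 2 = ‖inner A x x‖ := by
  rw [norm_eq_sqrt_norm_inner_self (A := A) x, Real.sq_sqrt (norm_nonneg _)]

lemma eq_of_inner_self_sub_eq_zero {x y : X} (h : inner A (x - y) (x - y) = 0) : x = y :=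
  sub_eq_zero.mp (inner_self.mp h)

lemma op_smul_sub (x : X) (a b : A) : x <• (a - b) = x <• a - x <• b := by
  refine eq_of_inner_self_sub_eq_zero (A := A) ?_
  simp only [inner_sub_left, inner_sub_right, inner_op_smul_left, inner_op_smul_right,
    star_sub, mul_sub, sub_mul]
  abel

lemma norm_op_smul_le (x : X) (a : A) : ‖x <• a‖ ≤ ‖x‖ * ‖a‖ := by
  refine (pow_le_pow_iff_left₀ (norm_nonneg _) (by positivity) two_ne_zero).mp ?_
  calc ‖x <• a‖ ^ 2 = ‖star a * inner A x x * a‖ := by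
        rw [norm_sq_eq_norm_inner_self (A := A), inner_op_smul_right, inner_op_smul_left]
    _ ≤ ‖a‖ * ‖inner A x x‖ * ‖a‖ := by
        refine (norm_mul_le _ _).trans (mul_le_mul_of_nonneg_right ?_ (norm_nonneg _))
        exact (norm_mul_le _ _).trans_eq (by rw [norm_star])
    _ = (‖x‖ * ‖a‖) ^ 2 := by rw [← norm_sq_eq_norm_inner_self (A := A)]; ring

variable [StarOrderedRing A]

lemma inner_mul_inner_swap_le {x y : X} :
    inner A y x * inner A x y ≤ ‖x‖ ^ 2 • inner A y y := by
  rcases eq_or_ne x 0 with rfl | hx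
  · simp
  have hpos : 0 < ‖x‖ ^ 2 := pow_pos (norm_pos_iff.mpr hx) 2
  have key (a : A) : (0 : A) ≤ ‖x‖ ^ 2 • (star a * a) - ‖x‖ ^ 2 • (star a * inner A x y)
      - ‖x‖ ^ 2 • (inner A y x * a) + ‖x‖ ^ 2 • (‖x‖ ^ 2 • inner A y y) :=
    calc (0 : A) ≤ inner A (x <• a - ‖x‖ ^ 2 • y) (x <• a - ‖x‖ ^ 2 • y) := inner_self_nonneg
      _ = star a * inner A x x * a - ‖x‖ ^ 2 • (star a * inner A x y)
          - ‖x‖ ^ 2 • (inner A y x * a) + ‖x‖ ^ 2 • (‖x‖ ^ 2 • inner A y y) := by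
        simp only [inner_sub_right, inner_op_smul_right, inner_sub_left, inner_op_smul_left,
          inner_smul_left_real, sub_mul, inner_smul_right_real,
          smul_sub, mul_assoc, smul_mul_assoc]
        abel
      _ ≤ ‖x‖ ^ 2 • (star a * a) - ‖x‖ ^ 2 • (star a * inner A x y)
          - ‖x‖ ^ 2 • (inner A y x * a) + ‖x‖ ^ 2 • (‖x‖ ^ 2 • inner A y y) := by
        gcongr
        rw [norm_sq_eq_norm_inner_self (A := A)]
        exact CStarAlgebra.star_left_conjugate_le_norm_smul (star_inner x x)
  specialize key (inner A x y)
  simp only [star_inner, sub_self, zero_sub, le_neg_add_iff_add_le, add_zero] at key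
  rwa [smul_le_smul_iff_of_pos_left hpos] at key

lemma norm_inner_le {x y : X} : ‖inner A x y‖ ≤ ‖x‖ * ‖y‖ := by
  refine (pow_le_pow_iff_left₀ (norm_nonneg _) (by positivity) two_ne_zero).mp ?_
  calc ‖inner A x y‖ ^ 2 = ‖inner A y x * inner A x y‖ := by
        rw [← star_inner x y, CStarRing.norm_star_mul_self, sq]
    _ ≤ ‖‖x‖ ^ 2 • inner A y y‖ := by
        refine CStarAlgebra.norm_le_norm_of_nonneg_of_le ?_ inner_mul_inner_swap_le
        rw [← star_inner x y]
        exact star_mul_self_nonneg _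
    _ = (‖x‖ * ‖y‖) ^ 2 := by
        rw [norm_smul, Real.norm_of_nonneg (by positivity),
          ← norm_sq_eq_norm_inner_self (A := A), mul_pow]

lemma continuous_inner_right (w : X) : Continuous fun y : X => inner A w y :=
  AddMonoidHomClass.continuous_of_bound
    ({ toFun := fun y => inner A w y, map_zero' := inner_zero_right,
       map_add' := fun _ _ => inner_add_right } : X →+ A) ‖w‖ fun _ => norm_inner_le

lemma inner_mem_closure_of_mem_smulIdealSpan {I : TwoSidedIdeal A} {z : X}
    (hz : z ∈ smulIdealSpan X (I : Set A)) (w : X) : inner A w z ∈ closure (I : Set A) := by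
  rw [← TwoSidedIdeal.mem_topologicalClosure]
  set C := I.topologicalClosure
  have hC : IsClosed (C : Set A) := TwoSidedIdeal.isClosed_topologicalClosure
  refine closure_minimal (fun y (hy : y ∈ Submodule.span ℂ _) => ?_)
    (hC.preimage (continuous_inner_right w)) hz
  induction hy using Submodule.span_induction with
  | mem y hy =>
    obtain ⟨k, hk, x, rfl⟩ := hy
    rw [Set.mem_preimage, inner_op_smul_right]
    exact C.mul_mem_left _ _ (TwoSidedIdeal.mem_topologicalClosure.mpr (subset_closure hk))
  | zero => simp
  | add x y _ _ hx hy => simpa [inner_add_right] using C.add_mem hx hy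
  | smul c x _ hx =>
    simpa [inner_smul_right_complex] using C.smul_mem_of_isClosed hC c hx

lemma inner_self_sub_mem {I : TwoSidedIdeal A} (hI : IsClosed (I : Set A)) {z s : X}
    (hz : inner A z z ∈ I) (hs : s ∈ smulIdealSpan X (I : Set A)) :
    inner A (z - s) (z - s) ∈ I := by
  have hright (w : X) : inner A w s ∈ I := by
    simpa [hI.closure_eq] using inner_mem_closure_of_mem_smulIdealSpan hs w
  have hleft : inner A s z ∈ I := by
    rw [← star_inner (A := A) z s]
    exact I.star_mem_of_isClosed hI (hright z)
  rw [inner_sub_left, inner_sub_right, inner_sub_right]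
  exact I.sub_mem (I.sub_mem hz (hright z)) (I.sub_mem hleft (hright s))

lemma norm_sub_op_smul_cfcₙ_approxUnitFun_le {ε : ℝ} (hε : 0 < ε) (z : X) :
    ‖z - z <• cfcₙ (approxUnitFun ε) (inner A z z)‖ ≤ ε := by
  set h := inner A z z
  set c := cfcₙ (approxUnitFun ε) h
  have hc : IsSelfAdjoint c := IsSelfAdjoint.cfcₙ
  have hsq : ‖z - z <• c‖ ^ 2 = ‖h - h * c - c * h + c * h * c‖ := by
    rw [norm_sq_eq_norm_inner_self (A := A), inner_sub_left, inner_sub_right, inner_sub_right,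
      inner_op_smul_left, inner_op_smul_left, inner_op_smul_right]
    simp only [hc.star_eq, h, mul_assoc]
    abel_nf
  refine (pow_le_pow_iff_left₀ (norm_nonneg _) hε.le two_ne_zero).mp ?_
  rw [hsq]
  exact norm_sub_cfcₙ_approxUnitFun_le hε inner_self_nonneg

lemma exists_near_add_of_inner_self_mem_closure_sup {P Q : TwoSidedIdeal A}
    (hP : IsClosed (P : Set A)) {z : X}
    (hz : inner A z z ∈ closure ((P ⊔ Q : TwoSidedIdeal A) : Set A)) {ε : ℝ} (hε : 0 < ε) :
    ∃ u ∈ smulIdealSpan X (P : Set A), ∃ v ∈ smulIdealSpan X (Q : Set A),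
      ‖z - u - v‖ < ε ∧ ‖u‖ ≤ 2 * ‖z‖ + ε ∧ ‖v‖ ≤ 2 * ‖z‖ + ε := by
  set c := cfcₙ (approxUnitFun (ε / 2)) (inner A z z)
  have hc : c ∈ closure ((P ⊔ Q : TwoSidedIdeal A) : Set A) := by
    rw [← TwoSidedIdeal.mem_topologicalClosure] at hz ⊢
    exact TwoSidedIdeal.cfcₙ_approxUnitFun_mem_of_isClosed
      TwoSidedIdeal.isClosed_topologicalClosure inner_self_nonneg.isSelfAdjoint hz (by positivity)
  have hc1 : ‖c‖ ≤ 1 := norm_cfcₙ_approxUnitFun_le_one (by positivity) _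
  have hzc : ‖z - z <• c‖ ≤ ε / 2 := norm_sub_op_smul_cfcₙ_approxUnitFun_le (by positivity) z
  set η := ε / (2 * (‖z‖ + 1))
  have hη : 0 < η := by positivity
  have hzη : ‖z‖ * η < ε / 2 := by
    rw [mul_div_assoc', div_lt_div_iff₀ (by positivity) two_pos]
    nlinarith [norm_nonneg z]
  obtain ⟨p, hp, q, hq, hpq, hpc, hqc⟩ := TwoSidedIdeal.exists_near_add_of_mem_closure_sup hP hc hη
  refine ⟨z <• p, op_smul_mem_smulIdealSpan hp z, z <• q, op_smul_mem_smulIdealSpan hq z,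
    ?_, ?_, ?_⟩
  · calc ‖z - z <• p - z <• q‖ = ‖(z - z <• c) + z <• (c - p - q)‖ := by
          rw [op_smul_sub, op_smul_sub]; abel_nf
      _ ≤ ε / 2 + ‖z‖ * η := (norm_add_le _ _).trans <| add_le_add hzc <|
          (norm_op_smul_le z _).trans (by gcongr)
      _ < ε := by linarith
  · calc ‖z <• p‖ ≤ ‖z‖ * ‖p‖ := norm_op_smul_le z p
      _ ≤ ‖z‖ * 1 := by gcongr; linarith
      _ ≤ 2 * ‖z‖ + ε := by linarith [norm_nonneg z]
  · calc ‖z <• q‖ ≤ ‖z‖ * ‖q‖ := norm_op_smul_le z q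
      _ ≤ ‖z‖ * (2 + η) := by gcongr; linarith
      _ ≤ 2 * ‖z‖ + ε := by linarith

lemma exists_eq_add_of_inner_self_mem_closure_sup [CompleteSpace X] {P Q : TwoSidedIdeal A}
    (hP : IsClosed (P : Set A)) {z : X}
    (hz : inner A z z ∈ closure ((P ⊔ Q : TwoSidedIdeal A) : Set A)) :
    ∃ u ∈ smulIdealSpan X (P : Set A), ∃ v ∈ smulIdealSpan X (Q : Set A), z = u + v := by
  set W := (P ⊔ Q).topologicalClosure
  have hW : IsClosed (W : Set A) := TwoSidedIdeal.isClosed_topologicalClosure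
  have hPW : (P : Set A) ⊆ W := fun _ h =>
    TwoSidedIdeal.mem_topologicalClosure.mpr (subset_closure (TwoSidedIdeal.mem_sup_left h))
  have hQW : (Q : Set A) ⊆ W := fun _ h =>
    TwoSidedIdeal.mem_topologicalClosure.mpr (subset_closure (TwoSidedIdeal.mem_sup_right h))
  have happrox : ∀ w ∈ {w : X | inner A w w ∈ W}, ∀ ε > 0,
      ∃ u ∈ smulIdealSpanAddSubgroup X (P : Set A), ∃ v ∈ smulIdealSpanAddSubgroup X (Q : Set A),
        w - u - v ∈ {w : X | inner A w w ∈ W} ∧ ‖w - u - v‖ < ε ∧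
        ‖u‖ ≤ 2 * ‖w‖ + ε ∧ ‖v‖ ≤ 2 * ‖w‖ + ε := by
    intro w hw ε hε
    obtain ⟨u, hu, v, hv, h⟩ := exists_near_add_of_inner_self_mem_closure_sup hP
      (TwoSidedIdeal.mem_topologicalClosure.mp hw) hε
    refine ⟨u, hu, v, hv, ?_, h⟩
    show inner A (w - u - v) (w - u - v) ∈ W
    rw [sub_sub]
    exact inner_self_sub_mem hW hw
      (add_mem_smulIdealSpan (smulIdealSpan_mono hPW hu) (smulIdealSpan_mono hQW hv))
  exact exists_eq_add_of_forall_approx (isClosed_smulIdealSpan _) (isClosed_smulIdealSpan _)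
    happrox (TwoSidedIdeal.mem_topologicalClosure.mpr hz)

lemma exists_sub_mem_smulIdealSpan_of_pairwise [CompleteSpace X] {ι : Type*}
    {J : ι → TwoSidedIdeal A} (hJ : ∀ i, IsClosed (J i : Set A)) (b : ι → X) (s : Finset ι)
    (hb : ∀ i ∈ s, ∀ j ∈ s, b i - b j ∈ smulIdealSpan X ((J i ⊔ J j : TwoSidedIdeal A) : Set A)) :
    ∃ x : X, ∀ i ∈ s, x - b i ∈ smulIdealSpan X (J i : Set A) := by
  classical
  induction s using Finset.induction_on with
  | empty => exact ⟨0, by simp⟩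
  | insert l s _ ih =>
    obtain ⟨y, hy⟩ := ih fun i hi j hj =>
      hb i (Finset.mem_insert_of_mem hi) j (Finset.mem_insert_of_mem hj)
    have hyl (i : ι) (hi : i ∈ s) :
        y - b l ∈ smulIdealSpan X ((J i ⊔ J l : TwoSidedIdeal A) : Set A) := by
      simpa using add_mem_smulIdealSpan
        (smulIdealSpan_mono (fun _ => TwoSidedIdeal.mem_sup_left) (hy i hi))
        (hb i (Finset.mem_insert_of_mem hi) l (Finset.mem_insert_self l s))
    have hinner := TwoSidedIdeal.mem_closure_biInf_sup J (J l) s fun i hi =>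
      inner_mem_closure_of_mem_smulIdealSpan (hyl i hi) (y - b l)
    obtain ⟨u, hu, v, hv, huv⟩ := exists_eq_add_of_inner_self_mem_closure_sup
      (TwoSidedIdeal.isClosed_biInf hJ (s : Set ι)) hinner
    refine ⟨y - u, Finset.forall_mem_insert _ _ _ |>.mpr ⟨?_, fun i hi => ?_⟩⟩
    · rwa [sub_right_comm, huv, add_sub_cancel_left]
    · rw [sub_right_comm]
      exact sub_mem_smulIdealSpan (hy i hi) <|
        smulIdealSpan_mono (fun _ h => TwoSidedIdeal.mem_biInf.mp h i hi) hu

lemma eq_of_forall_sub_mem_smulIdealSpan {ι : Type*} {J : ι → TwoSidedIdeal A}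
    (hJ : ∀ i, IsClosed (J i : Set A)) (hJinter : ∀ a : A, (∀ i, a ∈ J i) → a = 0) {x y : X}
    (h : ∀ i, x - y ∈ smulIdealSpan X (J i : Set A)) : x = y :=
  eq_of_inner_self_sub_eq_zero <| hJinter _ fun i => by
    simpa [(hJ i).closure_eq] using inner_mem_closure_of_mem_smulIdealSpan (h i) (x - y)

end RightCStarModule

theorem statement4_general
    {A : Type*} [NonUnitalCStarAlgebra A]
    [PartialOrder A] [StarOrderedRing A]
    {X : Type*} [NormedAddCommGroup X] [Module ℂ X] [SMul Aᵐᵒᵖ X]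
    [RightCStarModule A X] [CompleteSpace X]
    (n : ℕ)
    (J : Fin n → TwoSidedIdeal A)
    (hJclosed : ∀ i, IsClosed ((J i : Set A)))
    (hJinter : ∀ a : A, (∀ i, a ∈ J i) → a = 0) :
    ∀ b : Fin n → X,
      ((∃ x : X, ∀ i, x - b i ∈ smulIdealSpan X (J i : Set A)) ↔
        (∀ i j, b i - b j ∈ smulIdealSpan X ((J i ⊔ J j : TwoSidedIdeal A) : Set A))) ∧
      (∀ x x' : X, (∀ i, x - b i ∈ smulIdealSpan X (J i : Set A)) →
        (∀ i, x' - b i ∈ smulIdealSpan X (J i : Set A)) → x = x') := by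
  intro b
  refine ⟨⟨fun ⟨x, hx⟩ i j => sub_mem_smulIdealSpan_sup (hx i) (hx j), fun hb => ?_⟩,
    fun x x' hx hx' =>
      RightCStarModule.eq_of_forall_sub_mem_smulIdealSpan hJclosed hJinter fun i => ?_⟩
  · obtain ⟨x, hx⟩ := RightCStarModule.exists_sub_mem_smulIdealSpan_of_pairwise hJclosed b
      Finset.univ fun i _ j _ => hb i j
    exact ⟨x, fun i => hx i (Finset.mem_univ i)⟩
  · simpa using sub_mem_smulIdealSpan (hx i) (hx' i)

theorem statement4
    {A : Type*} [NonUnitalCStarAlgebra A]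
    [PartialOrder A] [StarOrderedRing A]
    {X : Type*} [NormedAddCommGroup X] [Module ℂ X] [SMul Aᵐᵒᵖ X]
    [RightCStarModule A X] [CompleteSpace X]
    (n : ℕ) (hn : 1 ≤ n)
    (J : Fin n → TwoSidedIdeal A)
    (hJclosed : ∀ i, IsClosed ((J i : Set A)))
    (hJinter : ∀ a : A, (∀ i, a ∈ J i) → a = 0) :
    ∀ b : Fin n → X,
      ((∃ x : X, ∀ i, x - b i ∈ smulIdealSpan X (J i : Set A)) ↔
        (∀ i j, b i - b j ∈ smulIdealSpan X ((J i ⊔ J j : TwoSidedIdeal A) : Set A))) ∧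
      (∀ x x' : X, (∀ i, x - b i ∈ smulIdealSpan X (J i : Set A)) →
        (∀ i, x' - b i ∈ smulIdealSpan X (J i : Set A)) → x = x') :=
  statement4_general n J hJclosed hJinter
end
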